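/- arXiv:2410.07750 — 2 statements merged into one kernel-verified Lean document; each statement's English description precedes it below -/
import Mathlib

section
/- Let a be a pure quaternion and B a nonzero quaternion. Then for every real number τ, the quaternion X_τ = -(τ + a)·B·i / |B|² satisfies X_τ ⋆ B = a. -/
/-!
Since `i* = -i`, the two terms of `A ⋆ B` are `A i B*` and minus its conjugate, so `A ⋆ B` is the
imaginary part of `A i B*`. For `X = -Y B i / |B|²` one gets `X i B* = Y B B* / |B|² = Y`
from `i² = -1`, hence `X_τ ⋆ B = Im (τ + a) = a` for pure `a`.
-/

open Quaternion

noncomputable def qi : Quaternion ℝ := ⟨0, 1, 0, 0⟩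

noncomputable def qstar (A B : Quaternion ℝ) : Quaternion ℝ :=
  ((1 : ℝ) / 2) • (A * qi * star B + B * qi * star A)

theorem star_qi : star qi = -qi :=
  star_eq_neg.mpr rfl

theorem qi_mul_qi : qi * qi = -1 := by
  rw [← sq, sq_eq_neg_normSq.mpr rfl, normSq_def']
  norm_num [qi]

theorem star_mul_qi_mul_star (A B : Quaternion ℝ) :
    star (A * qi * star B) = -(B * qi * star A) := by
  simp only [star_mul, star_star, star_qi, neg_mul, mul_neg, mul_assoc]

theorem qstar_eq_im (A B : Quaternion ℝ) : qstar A B = (A * qi * star B).im := by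
  rw [qstar, ← neg_neg (B * qi * star A), ← star_mul_qi_mul_star]
  ext <;> simp <;> ring

theorem neg_mul_mul_qi_mul_qi_mul_star (Y B : Quaternion ℝ) :
    -Y * B * qi * qi * star B = ‖B‖ ^ 2 • Y :=
  calc -Y * B * qi * qi * star B = Y * (B * star B) := by
        rw [mul_assoc (-Y * B) qi qi, qi_mul_qi]; noncomm_ring
    _ = ‖B‖ ^ 2 • Y := by
        rw [self_mul_star, normSq_eq_norm_mul_self, ← sq, ← coe_commutes, coe_mul_eq_smul]

/-- For pure `a` and nonzero `B`, every `X_τ = -(τ + a) B i / |B|²` solves `X ⋆ B = a`. -/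
theorem qstar_linear_solution (a B : Quaternion ℝ) (ha : a.re = 0) (hB : B ≠ 0) (τ : ℝ) :
    qstar ((‖B‖ ^ 2)⁻¹ • (-(((τ : ℝ) : Quaternion ℝ) + a) * B * qi)) B = a := by
  have hB2 : ‖B‖ ^ 2 ≠ 0 := by positivity
  have hX : (‖B‖ ^ 2)⁻¹ • (-((τ : Quaternion ℝ) + a) * B * qi) * qi * star B = τ + a := by
    rw [smul_mul_assoc, smul_mul_assoc, neg_mul_mul_qi_mul_qi_mul_star, inv_smul_smul₀ hB2]
  have ha_im : a.im = a := by
    rw [← sub_re_self, ha, coe_zero, sub_zero]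
  rw [qstar_eq_im, hX, im_add, im_coe, zero_add, ha_im]
end

section
/- Let a be a nonzero pure quaternion that is not a negative real multiple of i. Then for every angle φ, the quaternion X_φ = √|a| · ((a/|a| + i)/|a/|a| + i|) · (cos φ + i sin φ) satisfies X_φ ⋆ X_φ = a. -/
/-!
Since `X ⋆ X = X i X*`, a real factor of `X` comes out squared and a right factor `B` with
`B i B* = i`, such as `Q(φ)`, drops out. For a unit pure quaternion `b` one has
`b i b = i - 2⟨b, i⟩ b`, whence `(b + i) i (b + i)* = |b + i|² b`. With `b = a/|a|`, the scale
`√|a| / |b + i|` turns this into `X_φ ⋆ X_φ = |a| b = a`.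
-/

open Quaternion

/-- The unit quaternion `Q(φ) = cos φ + i sin φ`. -/
noncomputable def Qphi (φ : ℝ) : Quaternion ℝ := ⟨Real.cos φ, Real.sin φ, 0, 0⟩

lemma qstar_self (A : Quaternion ℝ) : qstar A A = A * qi * star A := by
  rw [qstar, ← two_smul ℝ, smul_smul]
  norm_num

lemma smul_mul_qi_mul_star_smul (c : ℝ) (A : Quaternion ℝ) :
    (c • A) * qi * star (c • A) = (c * c) • (A * qi * star A) := by
  simp only [Quaternion.star_smul, smul_mul_assoc, mul_smul_comm, smul_smul]

lemma mul_qi_mul_star_mul_of_conj_qi {A B : Quaternion ℝ} (hB : B * qi * star B = qi) :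
    (A * B) * qi * star (A * B) = A * qi * star A := by
  conv_rhs => rw [← hB]
  simp only [star_mul, mul_assoc]

lemma Qphi_mul_qi_mul_star (φ : ℝ) : Qphi φ * qi * star (Qphi φ) = qi := by
  ext <;> simp only [re_mul, imI_mul, imJ_mul, imK_mul, re_star, imI_star, imJ_star, imK_star] <;>
    simp only [Qphi, qi] <;> nlinarith [Real.sin_sq_add_cos_sq φ]

lemma add_qi_mul_qi_mul_star_add_qi {b : Quaternion ℝ} (hb : b.re = 0) (hb1 : normSq b = 1) :
    (b + qi) * qi * star (b + qi) = normSq (b + qi) • b := by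
  have hb1' : b.imI ^ 2 + b.imJ ^ 2 + b.imK ^ 2 = 1 := by simpa [normSq_def', hb] using hb1
  rw [normSq_def']
  ext <;> simp only [re_mul, imI_mul, imJ_mul, imK_mul, re_star, imI_star, imJ_star, imK_star,
    re_add, imI_add, imJ_add, imK_add, re_smul, imI_smul, imJ_smul, imK_smul, smul_eq_mul] <;>
    simp only [qi, hb]
  · ring
  · linear_combination -(1 + b.imI) * hb1'
  · linear_combination -b.imJ * hb1'
  · linear_combination -b.imK * hb1'

lemma normSq_inv_norm_smul {a : Quaternion ℝ} (ha0 : a ≠ 0) : normSq (‖a‖⁻¹ • a) = 1 := by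
  rw [normSq_eq_norm_mul_self, norm_smul, norm_inv, norm_norm,
    inv_mul_cancel₀ (norm_ne_zero_iff.mpr ha0), one_mul]

lemma inv_norm_smul_add_qi_ne_zero {a : Quaternion ℝ} (ha0 : a ≠ 0)
    (hni : ¬ ∃ c : ℝ, c < 0 ∧ a = c • qi) : ‖a‖⁻¹ • a + qi ≠ 0 := by
  intro h
  refine hni ⟨-‖a‖, neg_neg_iff_pos.mpr (norm_pos_iff.mpr ha0), ?_⟩
  rw [neg_smul, ← smul_neg, ← eq_neg_of_add_eq_zero_left h,
    smul_inv_smul₀ (norm_ne_zero_iff.mpr ha0)]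

/-- For a pure quaternion `a`, nonzero and not a negative real multiple of `i`,
`X_φ = √|a| ((a/|a| + i)/|a/|a| + i|) Q(φ)` solves `X ⋆ X = a` for every angle `φ`. -/
theorem qstar_sqrt_solution (a : Quaternion ℝ) (ha : a.re = 0) (ha0 : a ≠ 0)
    (hni : ¬ ∃ c : ℝ, c < 0 ∧ a = c • qi) (φ : ℝ) :
    qstar (Real.sqrt ‖a‖ • ((‖(‖a‖⁻¹ • a + qi)‖)⁻¹ • (‖a‖⁻¹ • a + qi) * Qphi φ))
          (Real.sqrt ‖a‖ • ((‖(‖a‖⁻¹ • a + qi)‖)⁻¹ • (‖a‖⁻¹ • a + qi) * Qphi φ)) = a := by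
  have hb : (‖a‖⁻¹ • a).re = 0 := by simp [ha]
  set s := ‖‖a‖⁻¹ • a + qi‖
  have hs : s ≠ 0 := norm_ne_zero_iff.mpr (inv_norm_smul_add_qi_ne_zero ha0 hni)
  have hscale : √‖a‖ * s⁻¹ * (√‖a‖ * s⁻¹) * (s * s) = ‖a‖ := by
    field_simp
    exact Real.sq_sqrt (norm_nonneg a)
  rw [smul_mul_assoc, smul_smul, qstar_self, smul_mul_qi_mul_star_smul,
    mul_qi_mul_star_mul_of_conj_qi (Qphi_mul_qi_mul_star φ),
    add_qi_mul_qi_mul_star_add_qi hb (normSq_inv_norm_smul ha0), smul_smul,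
    normSq_eq_norm_mul_self, hscale, smul_inv_smul₀ (norm_ne_zero_iff.mpr ha0)]
end
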